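/- arXiv:2108.03752 — 2 statements merged into one kernel-verified Lean document; each statement's English description precedes it below -/
import Mathlib

section
/- Let n ≥ 5 and let ã be the element (f, 1) of W = S_n ≀ S_n whose base component f has the transposition (0 1) in its first two coordinates and the identity in all other coordinates. Then the normal closure of ã in W equals the subgroup e ≀ Ã_n = {(f, 1) : ∏ i, sign (f i) = 1}. -/
/-!
The normal closure `N` of `ã` lies in the kernel of `w ↦ (w.right, ∏ i, sign (w.left i))`.
Conversely, the base vectors `f` with `(f, 1) ∈ N` form a subgroup `H` that is normal in the base
group and stable under permuting coordinates. Commuting `(y z)` placed at coordinate `k` with a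
conjugate of `ã` carrying `(x y)` at `k` puts a 3-cycle at coordinate `k`, so `H` contains every
vector of even permutations. Modulo those only the sign vector of `f` matters, and conjugates of
`ã` realise every sign vector with `-1` exactly at two coordinates; these generate all sign vectors
with product one.
-/

/-- The automorphism of `Fin n → G` permuting coordinates by `σ`:
`(σ • f) i = f (σ⁻¹ i)`. -/
def permAut {n : ℕ} {G : Type*} [Group G] (σ : Equiv.Perm (Fin n)) :
    MulAut (Fin n → G) where
  toFun f i := f (σ⁻¹ i)
  invFun f i := f (σ i)
  left_inv f := funext fun i => by simp
  right_inv f := funext fun i => by simp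
  map_mul' f g := rfl

/-- The action of `Equiv.Perm (Fin n)` on `Fin n → G` by permuting coordinates,
as a homomorphism into the automorphism group. -/
def permHom (n : ℕ) (G : Type*) [Group G] :
    Equiv.Perm (Fin n) →* MulAut (Fin n → G) where
  toFun := permAut
  map_one' := rfl
  map_mul' _ _ := rfl

/-- The permutational wreath product `S_n ≀ S_m`, realized as the semidirect
product `(Fin n → Equiv.Perm (Fin m)) ⋊ Equiv.Perm (Fin n)`. -/
abbrev W (n m : ℕ) : Type :=
  SemidirectProduct (Fin n → Equiv.Perm (Fin m)) (Equiv.Perm (Fin n))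
    (permHom n (Equiv.Perm (Fin m)))

open Equiv Equiv.Perm SemidirectProduct Subgroup
open scoped commutatorElement

namespace Pi

variable {ι G : Type*} [DecidableEq ι]

lemma commutatorElement_mulSingle_left [Group G] (i : ι) (x : G) (f : ι → G) :
    ⁅(Pi.mulSingle i x : ι → G), f⁆ = Pi.mulSingle i ⁅x, f i⁆ := by
  funext k
  by_cases hk : k = i
  · subst hk; simp [commutatorElement_def]
  · simp [commutatorElement_def, hk]

end Pi

namespace Subgroup

variable {ι G : Type*} [Fintype ι] [DecidableEq ι] [CommGroup G]

/-- `v = ∏ i, mulSingle i (v i) * mulSingle i₀ (v i)⁻¹` when `∏ i, v i = 1`. -/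
lemma mem_of_prod_eq_one (K : Subgroup (ι → G)) (i₀ : ι)
    (hK : ∀ i x, Pi.mulSingle i x * Pi.mulSingle i₀ x⁻¹ ∈ K) {v : ι → G}
    (hv : ∏ i, v i = 1) : v ∈ K := by
  have hdecomp : v = ∏ i, (Pi.mulSingle i (v i) * Pi.mulSingle i₀ (v i)⁻¹) := by
    have hsingle :
        ∏ i, (Pi.mulSingle i₀ (v i)⁻¹ : ι → G) = Pi.mulSingle i₀ (∏ i, (v i)⁻¹) :=
      (map_prod (MonoidHom.mulSingle (fun _ => G) i₀) _ _).symm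
    rw [Finset.prod_mul_distrib, Finset.univ_prod_mulSingle, hsingle, Finset.prod_inv_distrib,
      hv, inv_one, Pi.mulSingle_one, mul_one]
  rw [hdecomp]
  exact prod_mem fun i _ => hK i _

end Subgroup

section Signs

variable {ι α : Type*} [Fintype α] [DecidableEq α]

abbrev signs (ι α : Type*) [Fintype α] [DecidableEq α] : (ι → Perm α) →* (ι → ℤˣ) :=
  MonoidHom.compLeft sign ι

lemma signs_mulSingle [DecidableEq ι] (i : ι) (σ : Perm α) :
    signs ι α (Pi.mulSingle i σ) = Pi.mulSingle i (sign σ) :=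
  funext fun k => Pi.apply_mulSingle (fun _ => sign) (fun _ => map_one _) i σ k

lemma prod_sign_mulSingle [Fintype ι] [DecidableEq ι] (i : ι) (σ : Perm α) :
    ∏ k, sign ((Pi.mulSingle i σ : ι → Perm α) k) = sign σ := by
  rw [← Fintype.prod_pi_mulSingle' i (sign σ)]
  exact Finset.prod_congr rfl fun k _ => congrFun (signs_mulSingle i σ) k

lemma ker_signs : (signs ι α).ker = pi Set.univ fun _ => alternatingGroup α := by
  ext f
  simp [funext_iff, mem_pi]

lemma mem_of_signs_mem_map {H : Subgroup (ι → Perm α)}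
    (hA : (pi Set.univ fun _ => alternatingGroup α) ≤ H) {f : ι → Perm α}
    (hf : signs ι α f ∈ H.map (signs ι α)) : f ∈ H := by
  rw [← mem_comap, comap_map_eq, ker_signs, sup_of_le_left hA] at hf
  exact hf

end Signs

lemma alternatingGroup_le_of_isThreeCycle_mem {α : Type*} [Fintype α] [DecidableEq α]
    {K : Subgroup (Perm α)} [K.Normal] {c : Perm α} (hc : c.IsThreeCycle) (hcK : c ∈ K) :
    alternatingGroup α ≤ K := by
  rw [← closure_three_cycles_eq_alternating, closure_le]
  intro σ hσ
  obtain ⟨g, rfl⟩ := isConj_iff.mp (isConj_iff_cycleType_eq.mpr (hc.trans hσ.symm))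
  exact Normal.conj_mem inferInstance c hcK g

section Wreath

variable {n m : ℕ}

lemma permHom_mulSingle {G : Type*} [Group G] (σ : Perm (Fin n)) (i : Fin n) (x : G) :
    permHom n G σ (Pi.mulSingle i x) = Pi.mulSingle (σ i) x :=
  Pi.mulSingle_comp_equiv σ⁻¹ i x

def signProd (n m : ℕ) : W n m →* ℤˣ where
  toFun w := ∏ i, sign (w.left i)
  map_one' := by simp
  map_mul' v w := by
    simp only [mul_left, Pi.mul_apply, map_mul, Finset.prod_mul_distrib]
    congr 1
    exact Equiv.prod_comp v.right⁻¹ fun i => sign (w.left i)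

section BaseSubgroup

variable {H : Subgroup (Fin n → Perm (Fin m))}
  (hperm : ∀ σ, ∀ h ∈ H, permHom n _ σ h ∈ H) {i j : Fin n} (hij : i ≠ j) {x y : Fin m}
  (hxy : x ≠ y) (hpair : Pi.mulSingle i (swap x y) * Pi.mulSingle j (swap x y) ∈ H)

include hperm hij hxy hpair in
lemma alternatingGroup_le_comap_mulSingle [H.Normal] {z : Fin m} (hxz : x ≠ z) (hyz : y ≠ z)
    (k : Fin n) : alternatingGroup (Fin m) ≤ H.comap (MonoidHom.mulSingle _ k) := by
  set h := permHom n (Perm (Fin m)) (swap i k)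
    (Pi.mulSingle i (swap x y) * Pi.mulSingle j (swap x y))
  have hjk : swap i k j ≠ k := by
    rw [Ne, swap_apply_eq_iff, swap_apply_right]; exact hij.symm
  have hk : h k = swap x y := by
    simp [h, permHom_mulSingle, hjk]
  have hcomm : ⁅Pi.mulSingle k (swap y z), h⁆ ∈ H :=
    commutator_le_right ⊤ H (commutator_mem_commutator (mem_top _) (hperm _ _ hpair))
  have hcycle : ⁅swap y z, swap x y⁆ = swap x z * swap x y := by
    rw [commutatorElement_def, ← swap_apply_apply, swap_apply_of_ne_of_ne hxy hxz,
      swap_apply_left, swap_inv]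
  rw [Pi.commutatorElement_mulSingle_left, hk, hcycle] at hcomm
  exact alternatingGroup_le_of_isThreeCycle_mem (isThreeCycle_swap_mul_swap_same hxz hxy hyz.symm)
    hcomm

include hperm hij hxy hpair in
lemma mulSingle_mul_mulSingle_mem_map_signs (k : Fin n) (u : ℤˣ) :
    Pi.mulSingle k u * Pi.mulSingle i u⁻¹ ∈ H.map (signs _ _) := by
  by_cases hki : k = i
  · rw [hki, ← Pi.mulSingle_mul, mul_inv_cancel, Pi.mulSingle_one]
    exact one_mem _
  rcases Int.units_eq_one_or u with rfl | rfl
  · simp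
  refine ⟨_, hperm (swap j k) _ hpair, ?_⟩
  rw [map_mul, permHom_mulSingle, permHom_mulSingle, swap_apply_of_ne_of_ne hij (Ne.symm hki),
    swap_apply_left, map_mul, signs_mulSingle, signs_mulSingle, sign_swap hxy, mul_comm]
  simp

include hperm hij hxy hpair in
theorem mem_of_prod_sign_eq_one [H.Normal] {z : Fin m} (hxz : x ≠ z) (hyz : y ≠ z)
    {f : Fin n → Perm (Fin m)} (hf : ∏ k, sign (f k) = 1) : f ∈ H :=
  mem_of_signs_mem_map
    (pi_le_iff.mpr fun k => map_le_iff_le_comap.mpr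
      (alternatingGroup_le_comap_mulSingle hperm hij hxy hpair hxz hyz k))
    (mem_of_prod_eq_one _ i (mulSingle_mul_mulSingle_mem_map_signs hperm hij hxy hpair) hf)

end BaseSubgroup

theorem normalClosure_inl_mulSingle_mul_mulSingle {i j : Fin n} (hij : i ≠ j) {x y z : Fin m}
    (hxy : x ≠ y) (hxz : x ≠ z) (hyz : y ≠ z) :
    (normalClosure {(inl (Pi.mulSingle i (swap x y) * Pi.mulSingle j (swap x y)) : W n m)} :
      Set (W n m)) =
      {w | w.right = 1 ∧ ∏ k, sign (w.left k) = 1} := by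
  set N := normalClosure {(inl (Pi.mulSingle i (swap x y) * Pi.mulSingle j (swap x y)) : W n m)}
  ext w
  constructor
  · intro hw
    have hle : N ≤ (rightHom.prod (signProd n m)).ker := by
      refine normalClosure_le_normal (Set.singleton_subset_iff.mpr ?_)
      simp [signProd, Finset.prod_mul_distrib, prod_sign_mulSingle, sign_swap hxy]
    exact Prod.mk_eq_one.mp (hle hw)
  · rintro ⟨hright, hsign⟩
    have hw : w = inl w.left := SemidirectProduct.ext rfl hright
    rw [SetLike.mem_coe, hw, ← mem_comap]
    refine mem_of_prod_sign_eq_one (fun σ h hh => ?_) hij hxy ?_ hxz hyz hsign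
    · rw [mem_comap, inl_aut]
      exact normalClosure_normal.conj_mem _ hh _
    · exact subset_normalClosure rfl

end Wreath

/-- The normal closure in `W = S_n ≀ S_n` of the element `ã = (f, 1)` with
`f = ((0 1), (0 1), e, …, e)` equals `e ≀ Ã_n`. -/
theorem stmt1 (n : ℕ) (hn : 5 ≤ n) :
    (Subgroup.normalClosure
        {(⟨fun i => if i = (⟨0, by omega⟩ : Fin n) ∨ i = (⟨1, by omega⟩ : Fin n)
              then Equiv.swap (⟨0, by omega⟩ : Fin n) (⟨1, by omega⟩ : Fin n)
              else 1, 1⟩ : W n n)} :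
      Set (W n n)) =
    {w : W n n | w.right = 1 ∧ ∏ i, Equiv.Perm.sign (w.left i) = 1} := by
  set a : Fin n := ⟨0, by omega⟩
  set b : Fin n := ⟨1, by omega⟩
  have hab : a ≠ b := Fin.ne_of_val_ne zero_ne_one
  have hpair : (fun i => if i = a ∨ i = b then swap a b else 1) =
      Pi.mulSingle a (swap a b) * Pi.mulSingle b (swap a b) := by
    funext k
    by_cases hka : k = a <;> by_cases hkb : k = b <;> simp_all
  rw [← normalClosure_inl_mulSingle_mul_mulSingle hab hab (z := ⟨2, by omega⟩)
    (Fin.ne_of_val_ne (by simp [a])) (Fin.ne_of_val_ne (by simp [b])), ← hpair]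
  rfl
end

section
/- Let n ≥ 1 and m ≥ 2. The subgroup T̃_m = {(f, 1) : all f i have the same sign} of W is isomorphic to a semidirect product of the direct power (A_m)^n by the cyclic group of order 2; that is, there exists an action φ of the cyclic group C_2 on the group Fin n → alternatingGroup (Fin m) (a homomorphism from C_2 to its automorphism group) such that T̃_m is isomorphic as a group to the semidirect product (Fin n → alternatingGroup (Fin m)) ⋊_φ C_2. -/
/-!
`T̃_m` is the image, under the embedding of the base group into `W`, of the group of
tuples in `S_m` whose entries all have the same sign. Reading off that common sign is a
homomorphism onto `ℤˣ ≅ C₂` with kernel `(A_m)^n`, and it is split by sending `-1` to the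
constant tuple of a transposition. A split extension is a semidirect product.
-/

def MonoidHom.sameImageTuples {G A : Type*} [Group G] [Group A] (χ : G →* A) (ι : Type*) :
    Subgroup (ι → G) :=
  (Pi.constMonoidHom ι A).range.comap (χ.compLeft ι)

namespace MonoidHom.sameImageTuples

variable {G A ι : Type*} [Group G] [Group A] (χ : G →* A)

theorem mem_iff {f : ι → G} : f ∈ χ.sameImageTuples ι ↔ ∃ a, ∀ i, χ (f i) = a := by
  simp only [sameImageTuples, Subgroup.mem_comap, MonoidHom.mem_range, funext_iff,
    Pi.constMonoidHom_apply, MonoidHom.compLeft_apply, Function.comp_apply, Function.const_apply,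
    eq_comm]

theorem map_eq_one_of_map_eq_one {f : ι → G} (hf : f ∈ χ.sameImageTuples ι) {i₀ : ι}
    (h : χ (f i₀) = 1) (i : ι) : χ (f i) = 1 := by
  obtain ⟨a, ha⟩ := (mem_iff χ).1 hf
  rw [ha, ← ha i₀, h]

variable {σ : A →* G} (hσ : Function.RightInverse σ χ) (i₀ : ι)

def groupExtension : GroupExtension (ι → χ.ker) (χ.sameImageTuples ι) A where
  inl := (χ.ker.subtype.compLeft ι).codRestrict _ fun a => (mem_iff χ).2 ⟨1, fun i => (a i).2⟩
  rightHom := (Pi.evalMonoidHom _ i₀).comp ((χ.compLeft ι).comp (χ.sameImageTuples ι).subtype)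
  inl_injective a b hab := funext fun i => Subtype.ext (congrFun (congrArg Subtype.val hab) i)
  range_inl_eq_ker_rightHom := by
    ext ⟨f, hf⟩
    simp only [MonoidHom.mem_range, MonoidHom.mem_ker]
    constructor
    · rintro ⟨a, ha⟩
      cases ha
      exact (a i₀).2
    · intro h
      exact ⟨fun i => ⟨f i, map_eq_one_of_map_eq_one χ hf h i⟩, rfl⟩
  rightHom_surjective a := ⟨⟨fun _ => σ a, (mem_iff χ).2 ⟨a, fun _ => hσ a⟩⟩, hσ a⟩

def splitting : (groupExtension χ hσ i₀).Splitting where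
  toMonoidHom := ((Pi.constMonoidHom ι G).comp σ).codRestrict _
    fun a => (mem_iff χ).2 ⟨a, fun _ => hσ a⟩
  rightInverse_rightHom := hσ

end MonoidHom.sameImageTuples

theorem MonoidHom.sameImageTuples.mem_iff_units_int {G ι : Type*} [Group G] (χ : G →* ℤˣ)
    {f : ι → G} :
    f ∈ χ.sameImageTuples ι ↔ (∀ i, χ (f i) = 1) ∨ (∀ i, χ (f i) = -1) := by
  rw [MonoidHom.sameImageTuples.mem_iff]
  constructor
  · rintro ⟨a, ha⟩
    rcases Int.units_eq_one_or a with rfl | rfl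
    exacts [.inl ha, .inr ha]
  · rintro (h | h)
    exacts [⟨1, h⟩, ⟨-1, h⟩]

def unitsIntHomOfMulSelf {G : Type*} [Group G] (g : G) (hg : g * g = 1) : ℤˣ →* G where
  toFun u := if u = 1 then 1 else g
  map_one' := if_pos rfl
  map_mul' u v := by
    rcases Int.units_eq_one_or u with rfl | rfl <;>
      rcases Int.units_eq_one_or v with rfl | rfl <;> simp [hg]

theorem Equiv.Perm.rightInverse_sign_unitsIntHomOfMulSelf {α : Type*} [DecidableEq α] [Fintype α]
    {a b : α} (hab : a ≠ b) :
    Function.RightInverse (unitsIntHomOfMulSelf (swap a b) (swap_mul_self a b)) sign := by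
  intro u
  rcases Int.units_eq_one_or u with rfl | rfl <;> simp [unitsIntHomOfMulSelf, sign_swap hab]

theorem SemidirectProduct.mem_map_inl_iff {N G : Type*} [Group N] [Group G] {φ : G →* MulAut N}
    {K : Subgroup N} {w : N ⋊[φ] G} : w ∈ K.map inl ↔ w.right = 1 ∧ w.left ∈ K := by
  constructor
  · rintro ⟨f, hf, rfl⟩
    exact ⟨rfl, hf⟩
  · rintro ⟨hr, hl⟩
    exact ⟨w.left, hl, by ext <;> simp [hr]⟩

noncomputable def unitsIntMulEquivZModTwo : ℤˣ ≃* Multiplicative (ZMod 2) :=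
  mulEquivOfPrimeCardEq (p := 2) (by simp [Nat.card_eq_fintype_card, Fintype.card_units_int])
    (by simp)

/-- The subgroup `T̃_m` of `W = S_n ≀ S_m` is isomorphic to a semidirect
product `(A_m)^n ⋊ C_2`. -/
theorem stmt6 (n m : ℕ) (hn : 1 ≤ n) (hm : 2 ≤ m) :
    ∃ H : Subgroup (W n m),
      (H : Set (W n m)) =
        {w : W n m | w.right = 1 ∧
          ((∀ i, Equiv.Perm.sign (w.left i) = 1) ∨
           (∀ i, Equiv.Perm.sign (w.left i) = -1))} ∧
      ∃ φ : Multiplicative (ZMod 2) →* MulAut (Fin n → alternatingGroup (Fin m)),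
        Nonempty (H ≃* (Fin n → alternatingGroup (Fin m)) ⋊[φ] Multiplicative (ZMod 2)) := by
  have h01 : (⟨0, by omega⟩ : Fin m) ≠ ⟨1, by omega⟩ := by simp [Fin.ext_iff]
  let s := MonoidHom.sameImageTuples.splitting Equiv.Perm.sign
    (Equiv.Perm.rightInverse_sign_unitsIntHomOfMulSelf h01) (⟨0, hn⟩ : Fin n)
  refine ⟨(Equiv.Perm.sign.sameImageTuples (Fin n)).map SemidirectProduct.inl, ?_, _,
    ⟨(Subgroup.equivMapOfInjective _ _ SemidirectProduct.inl_injective).symm.trans <|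
      s.semidirectProductMulEquiv.symm.trans <|
        SemidirectProduct.congr' (N₂ := Fin n → alternatingGroup (Fin m)) (MulEquiv.refl _)
          unitsIntMulEquivZModTwo⟩⟩
  ext w
  simp only [SetLike.mem_coe, SemidirectProduct.mem_map_inl_iff,
    MonoidHom.sameImageTuples.mem_iff_units_int, Set.mem_ofPred_eq]
end
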